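/- Let 1 ≤ p, q < ∞, R > 0. Let u : ℝ^d → ℂ be integrable with supp(u) ⊆ B_R(0) and û ∈ L^q(ℝ^d). Let g ∈ C_c^∞(ℝ^d) with supp(g) ⊆ B_R(0) and ĝ ∈ L^1(ℝ^d). Then the mixed-norm quantity ‖V_g u‖_{L^{p,q}} := (∫_{ℝ^d} (∫_{ℝ^d} |V_g u(x,ω)|^p dx)^{q/p} dω)^{1/q} is finite and satisfies ‖V_g u‖_{L^{p,q}} ≤ |B_{2R}(0)|^{1/p} · ‖û‖_{L^q} · ‖ĝ‖_{L^1}. -/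

import Mathlib

open MeasureTheory Complex Metric
open scoped ENNReal NNReal FourierTransform

noncomputable section

/-- Short-time Fourier transform. -/
def STFT {d : ℕ} (g f : EuclideanSpace ℝ (Fin d) → ℂ)
    (x ω : EuclideanSpace ℝ (Fin d)) : ℂ :=
  ∫ t, f t * (starRingEnd ℂ) (g (t - x)) *
    Complex.exp (-(2 * Real.pi * Complex.I) * ((inner ℝ t ω : ℝ) : ℂ))

/-- Fourier transform. -/
def FT {d : ℕ} (f : EuclideanSpace ℝ (Fin d) → ℂ) (ω : EuclideanSpace ℝ (Fin d)) : ℂ :=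
  ∫ t, f t * Complex.exp (-(2 * Real.pi * Complex.I) * ((inner ℝ t ω : ℝ) : ℂ))

/-- Mixed `L^{p,q}` norm of a function of two variables. -/
def MixedNorm {d : ℕ} (F : EuclideanSpace ℝ (Fin d) → EuclideanSpace ℝ (Fin d) → ℂ)
    (p q : ℝ≥0∞) : ℝ≥0∞ :=
  (∫⁻ ω, (∫⁻ x, (‖F x ω‖₊ : ℝ≥0∞) ^ p.toReal) ^ (q.toReal / p.toReal)) ^ (1 / q.toReal)

lemma FT_eq {d : ℕ} (f : EuclideanSpace ℝ (Fin d) → ℂ) : FT f = 𝓕 f := by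
  funext w
  rw [FT, Real.fourier_eq']
  congr 1
  funext v
  rw [smul_eq_mul, mul_comm]
  congr 2
  push_cast
  ring

lemma FT_continuous {d : ℕ} {f : EuclideanSpace ℝ (Fin d) → ℂ} (hf : Integrable f) :
    Continuous (FT f) := by
  rw [FT_eq]
  exact VectorFourier.fourierIntegral_continuous Real.continuous_fourierChar
    (by exact continuous_inner) hf

lemma norm_exp_eq_one (c r : ℝ) : ‖Complex.exp ((c * Complex.I) * (r:ℂ))‖ = 1 := by
  have : (c * Complex.I) * (r:ℂ) = (((c * r : ℝ)) : ℂ) * Complex.I := by push_cast; ring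
  rw [this, Complex.norm_exp_ofReal_mul_I]

lemma conj_rep {d : ℕ} {g : EuclideanSpace ℝ (Fin d) → ℂ} (hgc : Continuous g)
    (hgi : Integrable g) (hFg : Integrable (FT g)) (s : EuclideanSpace ℝ (Fin d)) :
    (starRingEnd ℂ) (g s) = ∫ ξ, (starRingEnd ℂ) (FT g ξ) *
      Complex.exp (-(2 * Real.pi * Complex.I) * ((inner ℝ s ξ : ℝ) : ℂ)) := by
  have hFg' : Integrable (𝓕 g) := by rwa [← FT_eq]
  have h1 : g s = ∫ ξ, Complex.exp ((((2 * Real.pi * (inner ℝ ξ s : ℝ)) : ℝ) : ℂ) * Complex.I) • 𝓕 g ξ := by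
    conv_lhs => rw [← hgc.fourierInv_fourier_eq hgi hFg']
    exact Real.fourierInv_eq' (𝓕 g) s
  rw [h1, ← integral_conj]
  congr 1
  funext ξ
  rw [smul_eq_mul, map_mul, mul_comm, FT_eq]
  congr 1
  rw [← Complex.exp_conj]
  congr 1
  simp only [map_mul, Complex.conj_I, Complex.conj_ofReal]
  rw [real_inner_comm ξ s]
  push_cast
  ring

lemma integrable_conj' {α : Type*} [MeasurableSpace α] {μ : Measure α} {f : α → ℂ}
    (hf : Integrable f μ) : Integrable (fun x => (starRingEnd ℂ) (f x)) μ := by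
  refine ⟨?_, ?_⟩
  · exact continuous_star.comp_aestronglyMeasurable hf.1
  · have h := hf.2
    unfold HasFiniteIntegral at h ⊢
    simpa only [starRingEnd_apply, enorm_eq_nnnorm, nnnorm_star] using h

lemma stft_rep {d : ℕ} {u g : EuclideanSpace ℝ (Fin d) → ℂ} (hu : Integrable u)
    (hgc : Continuous g) (hgi : Integrable g) (hFg : Integrable (FT g))
    (x ω : EuclideanSpace ℝ (Fin d)) :
    STFT g u x ω = ∫ ξ, ((starRingEnd ℂ) (FT g ξ) *
        Complex.exp ((2 * Real.pi * Complex.I) * ((inner ℝ x ξ : ℝ) : ℂ))) * FT u (ω + ξ) := by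
  have key : ∀ t : EuclideanSpace ℝ (Fin d),
      u t * (starRingEnd ℂ) (g (t - x)) *
        Complex.exp (-(2 * Real.pi * Complex.I) * ((inner ℝ t ω : ℝ) : ℂ))
      = ∫ ξ, (u t * ((starRingEnd ℂ) (FT g ξ) *
          Complex.exp (-(2 * Real.pi * Complex.I) * ((inner ℝ (t - x) ξ : ℝ) : ℂ)))) *
          Complex.exp (-(2 * Real.pi * Complex.I) * ((inner ℝ t ω : ℝ) : ℂ)) := by
    intro t
    rw [conj_rep hgc hgi hFg (t - x), ← integral_const_mul, ← integral_mul_const]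
  have hInt : Integrable (Function.uncurry fun t ξ =>
      (u t * ((starRingEnd ℂ) (FT g ξ) *
          Complex.exp (-(2 * Real.pi * Complex.I) * ((inner ℝ (t - x) ξ : ℝ) : ℂ)))) *
          Complex.exp (-(2 * Real.pi * Complex.I) * ((inner ℝ t ω : ℝ) : ℂ)))
      (volume.prod volume) := by
    have h1 : Integrable (fun z : EuclideanSpace ℝ (Fin d) × EuclideanSpace ℝ (Fin d) =>
        u z.1 * (starRingEnd ℂ) (FT g z.2)) (volume.prod volume) :=
      hu.mul_prod (integrable_conj' hFg)
    have hψ : Continuous (fun z : EuclideanSpace ℝ (Fin d) × EuclideanSpace ℝ (Fin d) =>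
        Complex.exp (-(2 * Real.pi * Complex.I) * ((inner ℝ (z.1 - x) z.2 : ℝ) : ℂ)) *
        Complex.exp (-(2 * Real.pi * Complex.I) * ((inner ℝ z.1 ω : ℝ) : ℂ))) := by
      apply Continuous.mul
      · exact Complex.continuous_exp.comp (continuous_const.mul
          (Complex.continuous_ofReal.comp
            (continuous_inner.comp ((continuous_fst.sub continuous_const).prodMk
              continuous_snd))))
      · exact Complex.continuous_exp.comp (continuous_const.mul
          (Complex.continuous_ofReal.comp
            (continuous_inner.comp (continuous_fst.prodMk continuous_const))))
    have heq : (Function.uncurry fun t ξ =>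
        (u t * ((starRingEnd ℂ) (FT g ξ) *
          Complex.exp (-(2 * Real.pi * Complex.I) * ((inner ℝ (t - x) ξ : ℝ) : ℂ)))) *
          Complex.exp (-(2 * Real.pi * Complex.I) * ((inner ℝ t ω : ℝ) : ℂ)))
        = fun z : EuclideanSpace ℝ (Fin d) × EuclideanSpace ℝ (Fin d) =>
          (Complex.exp (-(2 * Real.pi * Complex.I) * ((inner ℝ (z.1 - x) z.2 : ℝ) : ℂ)) *
           Complex.exp (-(2 * Real.pi * Complex.I) * ((inner ℝ z.1 ω : ℝ) : ℂ))) *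
          (u z.1 * (starRingEnd ℂ) (FT g z.2)) := by
      funext z
      simp only [Function.uncurry]
      ring
    rw [heq]
    refine h1.bdd_mul (c := 1) hψ.aestronglyMeasurable (Filter.Eventually.of_forall fun z => ?_)
    rw [norm_mul]
    have e1 : ‖Complex.exp (-(2 * Real.pi * Complex.I) * ((inner ℝ (z.1 - x) z.2 : ℝ) : ℂ))‖ = 1 := by
      simpa using norm_exp_eq_one (-(2 * Real.pi)) (inner ℝ (z.1 - x) z.2 : ℝ)
    have e2 : ‖Complex.exp (-(2 * Real.pi * Complex.I) * ((inner ℝ z.1 ω : ℝ) : ℂ))‖ = 1 := by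
      simpa using norm_exp_eq_one (-(2 * Real.pi)) (inner ℝ z.1 ω : ℝ)
    rw [e1, e2]; norm_num
  rw [STFT]
  simp_rw [key]
  rw [MeasureTheory.integral_integral_swap hInt]
  congr 1
  funext ξ
  rw [show FT u (ω + ξ) = ∫ t, u t *
      Complex.exp (-(2 * Real.pi * Complex.I) * ((inner ℝ t (ω + ξ) : ℝ) : ℂ)) from rfl,
    ← integral_const_mul]
  congr 1
  funext t
  have hexp : Complex.exp (-(2 * Real.pi * Complex.I) * ((((inner ℝ t ξ : ℝ) - (inner ℝ x ξ : ℝ)) : ℝ) : ℂ)) *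
      Complex.exp (-(2 * Real.pi * Complex.I) * ((inner ℝ t ω : ℝ) : ℂ))
      = Complex.exp ((2 * Real.pi * Complex.I) * ((inner ℝ x ξ : ℝ) : ℂ)) *
        Complex.exp (-(2 * Real.pi * Complex.I) * ((((inner ℝ t ω : ℝ) + (inner ℝ t ξ : ℝ)) : ℝ) : ℂ)) := by
    rw [← Complex.exp_add, ← Complex.exp_add]
    congr 1
    push_cast
    ring
  rw [inner_sub_left, inner_add_right]
  calc (u t * ((starRingEnd ℂ) (FT g ξ) *
        Complex.exp (-(2 * Real.pi * Complex.I) * ((((inner ℝ t ξ : ℝ) - (inner ℝ x ξ : ℝ)) : ℝ) : ℂ)))) *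
        Complex.exp (-(2 * Real.pi * Complex.I) * ((inner ℝ t ω : ℝ) : ℂ))
      = (starRingEnd ℂ) (FT g ξ) * u t *
        (Complex.exp (-(2 * Real.pi * Complex.I) * ((((inner ℝ t ξ : ℝ) - (inner ℝ x ξ : ℝ)) : ℝ) : ℂ)) *
         Complex.exp (-(2 * Real.pi * Complex.I) * ((inner ℝ t ω : ℝ) : ℂ))) := by ring
    _ = (starRingEnd ℂ) (FT g ξ) * u t *
        (Complex.exp ((2 * Real.pi * Complex.I) * ((inner ℝ x ξ : ℝ) : ℂ)) *
         Complex.exp (-(2 * Real.pi * Complex.I) * ((((inner ℝ t ω : ℝ) + (inner ℝ t ξ : ℝ)) : ℝ) : ℂ))) := by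
        rw [hexp]
    _ = ((starRingEnd ℂ) (FT g ξ) * Complex.exp ((2 * Real.pi * Complex.I) * ((inner ℝ x ξ : ℝ) : ℂ))) *
        (u t * Complex.exp (-(2 * Real.pi * Complex.I) * ((((inner ℝ t ω : ℝ) + (inner ℝ t ξ : ℝ)) : ℝ) : ℂ))) := by
        ring

lemma stft_zero {d : ℕ} {u g : EuclideanSpace ℝ (Fin d) → ℂ} {R : ℝ}
    (hu_supp : Function.support u ⊆ closedBall 0 R)
    (hg_supp : tsupport g ⊆ closedBall 0 R)
    {x : EuclideanSpace ℝ (Fin d)} (hx : 2 * R < ‖x‖) (ω : EuclideanSpace ℝ (Fin d)) :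
    STFT g u x ω = 0 := by
  rw [STFT]
  have h : ∀ t : EuclideanSpace ℝ (Fin d), u t * (starRingEnd ℂ) (g (t - x)) *
      Complex.exp (-(2 * Real.pi * Complex.I) * ((inner ℝ t ω : ℝ) : ℂ)) = 0 := by
    intro t
    by_cases hut : u t = 0
    · simp [hut]
    · have ht : ‖t‖ ≤ R := by
        have := hu_supp (Function.mem_support.mpr hut)
        simpa [mem_closedBall_zero_iff] using this
      have hg0 : g (t - x) = 0 := by
        apply image_eq_zero_of_notMem_tsupport
        intro hmem
        have := hg_supp hmem
        rw [mem_closedBall_zero_iff] at this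
        have h1 : ‖x‖ - ‖t‖ ≤ ‖t - x‖ := by
          rw [norm_sub_rev]
          exact norm_sub_norm_le x t
        linarith
      simp [hg0]
  simp_rw [h]
  exact integral_zero _ _

lemma young_conv {d : ℕ} {f h : EuclideanSpace ℝ (Fin d) → ℝ≥0∞}
    (hf : Measurable f) (hh : Measurable h) (hA : (∫⁻ ξ, f ξ) ≠ ⊤) {s : ℝ} (hs : 1 ≤ s) :
    ∫⁻ ω, (∫⁻ ξ, f ξ * h (ω + ξ)) ^ s ≤ (∫⁻ ξ, f ξ) ^ s * ∫⁻ ω, h ω ^ s := by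
  have hs0 : (0:ℝ) < s := lt_of_lt_of_le zero_lt_one hs
  have hTon : ∀ k : EuclideanSpace ℝ (Fin d) → ℝ≥0∞, Measurable k →
      (∫⁻ ω, ∫⁻ ξ, f ξ * k (ω + ξ)) = (∫⁻ ξ, f ξ) * ∫⁻ ω, k ω := by
    intro k hk
    rw [lintegral_lintegral_swap]
    · have : ∀ ξ, (∫⁻ ω, f ξ * k (ω + ξ)) = f ξ * ∫⁻ ω, k ω := by
        intro ξ
        have hm : Measurable fun ω => k (ω + ξ) := hk.comp (measurable_add_const ξ)
        rw [lintegral_const_mul _ hm, lintegral_add_right_eq_self k ξ]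
      simp_rw [this]
      rw [lintegral_mul_const _ hf]
    · exact ((hf.comp measurable_snd).mul
        (hk.comp (measurable_fst.add measurable_snd))).aemeasurable
  rcases eq_or_lt_of_le hs with hseq | hslt
  · simp only [← hseq, ENNReal.rpow_one]
    exact le_of_eq (hTon h hh)
  · set s' := Real.conjExponent s with hs'
    have hcon' : s.HolderConjugate s' := Real.HolderConjugate.conjExponent hslt
    have hcon : s'.HolderConjugate s := hcon'.symm
    have hs'0 : (0:ℝ) < s' := hcon.pos
    have hinv : 1/s' + 1/s = 1 := by
      simpa [one_div] using hcon.inv_add_inv_eq_one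
    set A := ∫⁻ ξ, f ξ with hAdef
    have key : ∀ ω, (∫⁻ ξ, f ξ * h (ω + ξ)) ^ s
        ≤ A ^ (s/s') * ∫⁻ ξ, f ξ * h (ω + ξ) ^ s := by
      intro ω
      have step1 : (∫⁻ ξ, f ξ * h (ω + ξ))
          ≤ A ^ (1/s') * (∫⁻ ξ, f ξ * h (ω + ξ) ^ s) ^ (1/s) := by
        have hm1 : Measurable fun ξ => f ξ ^ (1/s') := hf.pow_const (1/s')
        have hm2 : Measurable fun ξ => f ξ ^ (1/s) * h (ω + ξ) :=
          (hf.pow_const (1/s)).mul (hh.comp (measurable_const_add ω))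
        have hH := ENNReal.lintegral_mul_le_Lp_mul_Lq volume hcon
          hm1.aemeasurable hm2.aemeasurable
        have e1 : (∫⁻ ξ, ((fun ξ => f ξ ^ (1/s')) * fun ξ => f ξ ^ (1/s) * h (ω + ξ)) ξ)
            = ∫⁻ ξ, f ξ * h (ω + ξ) := by
          congr 1; funext ξ
          simp only [Pi.mul_apply]
          rw [← mul_assoc, ← ENNReal.rpow_add_of_nonneg _ _ (by positivity) (by positivity),
            hinv, ENNReal.rpow_one]
        have e2 : (∫⁻ ξ, (f ξ ^ (1/s')) ^ s') = A := by
          congr 1; funext ξ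
          rw [← ENNReal.rpow_mul, one_div, inv_mul_cancel₀ hs'0.ne', ENNReal.rpow_one]
        have e3 : (∫⁻ ξ, (f ξ ^ (1/s) * h (ω + ξ)) ^ s) = ∫⁻ ξ, f ξ * h (ω + ξ) ^ s := by
          congr 1; funext ξ
          rw [ENNReal.mul_rpow_of_nonneg _ _ hs0.le, ← ENNReal.rpow_mul, one_div,
            inv_mul_cancel₀ hs0.ne', ENNReal.rpow_one]
        rw [e1, e2, e3] at hH
        exact hH
      calc (∫⁻ ξ, f ξ * h (ω + ξ)) ^ s
          ≤ (A ^ (1/s') * (∫⁻ ξ, f ξ * h (ω + ξ) ^ s) ^ (1/s)) ^ s :=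
            ENNReal.rpow_le_rpow step1 hs0.le
        _ = A ^ (s/s') * ∫⁻ ξ, f ξ * h (ω + ξ) ^ s := by
            rw [ENNReal.mul_rpow_of_nonneg _ _ hs0.le, ← ENNReal.rpow_mul,
              ← ENNReal.rpow_mul, one_div, one_div]
            congr 2
            · field_simp
            · rw [inv_mul_cancel₀ hs0.ne', ENNReal.rpow_one]
    calc ∫⁻ ω, (∫⁻ ξ, f ξ * h (ω + ξ)) ^ s
        ≤ ∫⁻ ω, A ^ (s/s') * ∫⁻ ξ, f ξ * h (ω + ξ) ^ s := lintegral_mono key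
      _ = A ^ (s/s') * ∫⁻ ω, ∫⁻ ξ, f ξ * h (ω + ξ) ^ s :=
          lintegral_const_mul' _ _ (ENNReal.rpow_ne_top_of_nonneg (by positivity) hA)
      _ = A ^ (s/s') * (A * ∫⁻ ω, h ω ^ s) := by rw [hTon _ (hh.pow_const s)]
      _ = A ^ s * ∫⁻ ω, h ω ^ s := by
          rw [← mul_assoc]
          congr 1
          have : A ^ (s/s') * A = A ^ (s/s') * A ^ (1:ℝ) := by rw [ENNReal.rpow_one]
          rw [this, ← ENNReal.rpow_add_of_nonneg _ _ (by positivity) zero_le_one]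
          congr 1
          have hss' : s / s' + 1 = s := by
            field_simp at hinv ⊢
            nlinarith [hinv]
          linarith [hss']

theorem stft_mixed_norm_bound {d : ℕ} (p q : ℝ≥0∞) (hp : 1 ≤ p) (hp' : p ≠ ⊤)
    (hq : 1 ≤ q) (hq' : q ≠ ⊤)
    (R : ℝ) (hR : 0 < R) (u g : EuclideanSpace ℝ (Fin d) → ℂ)
    (hu_int : Integrable u) (hu_supp : Function.support u ⊆ closedBall 0 R)
    (hFu : MemLp (FT u) q)
    (hg_smooth : ContDiff ℝ (⊤ : ℕ∞) g) (hg_cpt : HasCompactSupport g)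
    (hg_supp : tsupport g ⊆ closedBall 0 R) (hFg : Integrable (FT g)) :
    MixedNorm (STFT g u) p q < ⊤ ∧
      MixedNorm (STFT g u) p q ≤
        (volume (closedBall (0 : EuclideanSpace ℝ (Fin d)) (2 * R))) ^ (1 / p.toReal) *
          eLpNorm (FT u) q volume * eLpNorm (FT g) 1 volume := by
  have hgc : Continuous g := hg_smooth.continuous
  have hgi : Integrable g := hgc.integrable_of_hasCompactSupport hg_cpt
  set r := p.toReal with hrdef
  set s := q.toReal with hsdef
  have hr1 : 1 ≤ r := by
    rw [hrdef, ← ENNReal.toReal_one]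
    exact ENNReal.toReal_mono hp' hp
  have hs1 : 1 ≤ s := by
    rw [hsdef, ← ENNReal.toReal_one]
    exact ENNReal.toReal_mono hq' hq
  have hr0 : (0:ℝ) < r := lt_of_lt_of_le zero_lt_one hr1
  have hs0 : (0:ℝ) < s := lt_of_lt_of_le zero_lt_one hs1
  have hq0 : q ≠ 0 := (lt_of_lt_of_le zero_lt_one hq).ne'
  set B := closedBall (0 : EuclideanSpace ℝ (Fin d)) (2 * R) with hBdef
  have hBfin : volume B ≠ ⊤ := measure_closedBall_lt_top.ne
  set A := ∫⁻ ξ, (‖FT g ξ‖₊ : ℝ≥0∞) with hAdef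
  have hAtop : A ≠ ⊤ := hFg.2.ne
  set Nu := ∫⁻ ω, (‖FT u ω‖₊ : ℝ≥0∞) ^ s with hNudef
  have hcu : Continuous (FT u) := FT_continuous hu_int
  have hcg : Continuous (FT g) := FT_continuous hgi
  have hmu : Measurable fun w => (‖FT u w‖₊ : ℝ≥0∞) := hcu.measurable.enorm
  have hmg : Measurable fun w => (‖FT g w‖₊ : ℝ≥0∞) := hcg.measurable.enorm
  set K := fun ω => ∫⁻ ξ, (‖FT g ξ‖₊ : ℝ≥0∞) * (‖FT u (ω + ξ)‖₊ : ℝ≥0∞) with hKdef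
  have hbound : ∀ x ω, (‖STFT g u x ω‖₊ : ℝ≥0∞) ≤ K ω := by
    intro x ω
    rw [stft_rep hu_int hgc hgi hFg x ω]
    refine le_trans (enorm_integral_le_lintegral_enorm _) ?_
    refine lintegral_mono fun ξ => ?_
    rw [enorm_eq_nnnorm, nnnorm_mul, nnnorm_mul, ENNReal.coe_mul, ENNReal.coe_mul]
    have he : ‖Complex.exp ((2 * Real.pi * Complex.I) * ((inner ℝ x ξ : ℝ) : ℂ))‖₊ = 1 := by
      apply NNReal.coe_injective
      simpa [coe_nnnorm] using norm_exp_eq_one (2 * Real.pi) (inner ℝ x ξ : ℝ)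
    have hc : ‖(starRingEnd ℂ) (FT g ξ)‖₊ = ‖FT g ξ‖₊ := by
      exact nnnorm_star _
    rw [he, hc]
    simp
  have hin : ∀ ω, (∫⁻ x, (‖STFT g u x ω‖₊ : ℝ≥0∞) ^ r) ≤ volume B * K ω ^ r := by
    intro ω
    have hle : ∀ x, (‖STFT g u x ω‖₊ : ℝ≥0∞) ^ r
        ≤ Set.indicator B (fun _ => K ω ^ r) x := by
      intro x
      by_cases hx : x ∈ B
      · rw [Set.indicator_of_mem hx]
        exact ENNReal.rpow_le_rpow (hbound x ω) hr0.le
      · rw [Set.indicator_of_notMem hx]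
        have hxn : 2 * R < ‖x‖ := by
          rw [hBdef, mem_closedBall_zero_iff] at hx
          exact lt_of_not_ge hx
        rw [stft_zero hu_supp hg_supp hxn ω]
        simp [ENNReal.zero_rpow_of_pos hr0]
    calc (∫⁻ x, (‖STFT g u x ω‖₊ : ℝ≥0∞) ^ r)
        ≤ ∫⁻ x, Set.indicator B (fun _ => K ω ^ r) x := lintegral_mono hle
      _ = K ω ^ r * volume B := by
          rw [lintegral_indicator measurableSet_closedBall, setLIntegral_const]
      _ = volume B * K ω ^ r := mul_comm _ _
  have hmain : MixedNorm (STFT g u) p q ≤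
      (volume B ^ (s/r) * (A ^ s * Nu)) ^ (1/s) := by
    rw [MixedNorm]
    refine ENNReal.rpow_le_rpow ?_ (by positivity)
    calc ∫⁻ ω, (∫⁻ x, (‖STFT g u x ω‖₊ : ℝ≥0∞) ^ r) ^ (s/r)
        ≤ ∫⁻ ω, volume B ^ (s/r) * K ω ^ s := by
          refine lintegral_mono fun ω => ?_
          calc (∫⁻ x, (‖STFT g u x ω‖₊ : ℝ≥0∞) ^ r) ^ (s/r)
              ≤ (volume B * K ω ^ r) ^ (s/r) :=
                ENNReal.rpow_le_rpow (hin ω) (by positivity)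
            _ = volume B ^ (s/r) * K ω ^ s := by
                rw [ENNReal.mul_rpow_of_nonneg _ _ (by positivity), ← ENNReal.rpow_mul]
                congr 2
                field_simp
      _ = volume B ^ (s/r) * ∫⁻ ω, K ω ^ s :=
          lintegral_const_mul' _ _ (ENNReal.rpow_ne_top_of_nonneg (by positivity) hBfin)
      _ ≤ volume B ^ (s/r) * (A ^ s * Nu) := by
          refine mul_le_mul_right ?_ _
          exact young_conv hmg hmu hAtop hs1
  have hRHS : (volume B ^ (s/r) * (A ^ s * Nu)) ^ (1/s)
      = volume B ^ (1/r) * eLpNorm (FT u) q volume * eLpNorm (FT g) 1 volume := by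
    rw [eLpNorm_eq_lintegral_rpow_enorm_toReal hq0 hq', eLpNorm_one_eq_lintegral_enorm]
    rw [ENNReal.mul_rpow_of_nonneg _ _ (by positivity),
      ENNReal.mul_rpow_of_nonneg _ _ (by positivity),
      ← ENNReal.rpow_mul, ← ENNReal.rpow_mul]
    have e1 : s / r * (1/s) = 1/r := by field_simp
    have e2 : s * (1/s) = 1 := by field_simp
    rw [e1, e2, ENNReal.rpow_one, ← hsdef]
    simp only [enorm_eq_nnnorm]
    rw [← hAdef, ← hNudef]
    ring
  refine ⟨?_, ?_⟩
  · refine lt_of_le_of_lt (le_trans hmain (le_of_eq hRHS)) ?_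
    refine ENNReal.mul_lt_top (ENNReal.mul_lt_top ?_ ?_) ?_
    · exact ENNReal.rpow_lt_top_of_nonneg (by positivity) hBfin
    · exact hFu.2
    · rw [eLpNorm_one_eq_lintegral_enorm]
      exact hFg.2
  · exact le_trans hmain (le_of_eq hRHS)
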